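/- Let H = [0,1]^N and H_V = {0,1}^N. For any three vertices x_k, x_j, x_l ∈ H_V, the set B_kjl = {x ∈ H : x_k·x = x_j·x = x_l·x} equals the convex hull of H_kjl = {h ∈ H_V : x_k·h = x_j·h = x_l·h}. -/

import Mathlib

/-- Standard inner product on `Fin N → ℝ`. -/
noncomputable def dotp {N : ℕ} (a b : Fin N → ℝ) : ℝ := ∑ i, a i * b i

/-- The unit hypercube `[0,1]^N`. -/
def unitCube (N : ℕ) : Set (Fin N → ℝ) := {x | ∀ i, x i ∈ Set.Icc (0:ℝ) 1}

/-- Vertices of the unit hypercube: 0/1-valued vectors. -/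
def cubeVerts (N : ℕ) : Set (Fin N → ℝ) := {x | ∀ i, x i = 0 ∨ x i = 1}

/-!
The slice `P = H ∩ {x | x_k ⬝ x = x_j ⬝ x = x_l ⬝ x}` is compact and convex, so by Krein–Milman
it is the convex hull of its extreme points, and it suffices to show that these are vertices of
`H`. If `x ∈ P` has a fractional coordinate, we find `d ≠ 0` supported on the fractional
coordinates of `x` with `(x_k - x_j) ⬝ d = (x_j - x_l) ⬝ d = 0`; then `x ± ε d ∈ P`, so `x` is
not extreme. The integral rows `x_k - x_j` and `x_j - x_l` have all entries and `2 × 2` minors in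
`{-1, 0, 1}`. With at least three fractional coordinates `d` exists by a dimension count; with one
or two, the other coordinates are `0` or `1`, and integrality forces the relevant minor to vanish.
-/

open Set Filter Topology

theorem convexHull_extremePoints_of_finite {E : Type*} [AddCommGroup E] [Module ℝ E]
    [TopologicalSpace E] [T2Space E] [IsTopologicalAddGroup E] [ContinuousSMul ℝ E]
    [LocallyConvexSpace ℝ E] {P : Set E} (hP : IsCompact P) (hPc : Convex ℝ P)
    (hfin : (P.extremePoints ℝ).Finite) : convexHull ℝ (P.extremePoints ℝ) = P := by
  rw [← (hfin.isClosed_convexHull ℝ).closure_eq]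
  exact closure_convexHull_extremePoints hP hPc

section Kernel

variable {ι R : Type*} [Fintype ι] [DecidableEq ι] [CommRing R] [Nontrivial R]

theorem exists_ne_zero_dotProduct_eq_zero_of_pair (a b : ι → R) {i j : ι} (hij : i ≠ j)
    (hdet : a i * b j = a j * b i) :
    ∃ d ≠ 0, Function.support d ⊆ {i, j} ∧ a ⬝ᵥ d = 0 ∧ b ⬝ᵥ d = 0 := by
  have hsupp (s t : R) : Function.support (Pi.single i s - Pi.single j t : ι → R) ⊆ {i, j} := by
    rw [insert_eq]
    exact (Function.support_sub _ _).trans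
      (union_subset_union Pi.support_single_subset Pi.support_single_subset)
  by_cases ha : a i = 0
  · by_cases hb : b i = 0
    · refine ⟨Pi.single i 1, by simp, Pi.support_single_subset.trans (by simp), ?_, ?_⟩ <;>
        simp [ha, hb]
    · refine ⟨Pi.single i (b j) - Pi.single j (b i), fun h => hb ?_, hsupp _ _, ?_, ?_⟩
      · simpa [hij] using congr_fun h j
      · simp [dotProduct_sub]
        linear_combination hdet
      · simp [dotProduct_sub, mul_comm]
  · refine ⟨Pi.single i (a j) - Pi.single j (a i), fun h => ha ?_, hsupp _ _, ?_, ?_⟩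
    · simpa [hij] using congr_fun h j
    · simp [dotProduct_sub, mul_comm]
    · simp [dotProduct_sub]
      linear_combination -hdet

theorem exists_ne_zero_dotProduct_eq_zero_of_triple (a b : ι → R) {i j k : ι} (hij : i ≠ j)
    (hik : i ≠ k) (hjk : j ≠ k) :
    ∃ d ≠ 0, Function.support d ⊆ {i, j, k} ∧ a ⬝ᵥ d = 0 ∧ b ⬝ᵥ d = 0 := by
  by_cases hdet : a i * b j = a j * b i
  · obtain ⟨d, hd, hsupp, hda, hdb⟩ := exists_ne_zero_dotProduct_eq_zero_of_pair a b hij hdet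
    exact ⟨d, hd, hsupp.trans fun m hm => by rcases hm with rfl | rfl <;> simp, hda, hdb⟩
  -- the cross product of the rows `a` and `b` restricted to the coordinates `i, j, k`
  refine ⟨Pi.single i (a j * b k - a k * b j) + Pi.single j (a k * b i - a i * b k) +
    Pi.single k (a i * b j - a j * b i), fun h => hdet ?_, ?_, ?_, ?_⟩
  · simpa [hik.symm, hjk.symm, sub_eq_zero] using congr_fun h k
  · intro m hm
    by_contra h
    simp only [mem_insert_iff, mem_singleton_iff, not_or] at h
    simp [h.1, h.2.1, h.2.2] at hm
  all_goals simp [dotProduct_add]; ring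

end Kernel

section Cube

variable {N : ℕ}

theorem unitCube_eq_Icc : unitCube N = Icc 0 1 := by
  ext x
  simp [unitCube, Pi.le_def, forall_and]

theorem cubeVerts_subset_unitCube : cubeVerts N ⊆ unitCube N := by
  intro x hx i
  rcases hx i with h | h <;> simp [h]

theorem cubeVerts_finite : (cubeVerts N).Finite := by
  have : cubeVerts N = univ.pi fun _ => {0, 1} := by
    ext x
    simp [cubeVerts]
  rw [this]
  exact Finite.pi fun _ => toFinite _

theorem eventually_add_smul_mem_unitCube {x d : Fin N → ℝ} (hx : x ∈ unitCube N)
    (hd : Function.support d ⊆ {m | x m ∈ Ioo 0 1}) :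
    ∀ᶠ t in 𝓝 (0 : ℝ), x + t • d ∈ unitCube N := by
  refine eventually_all.2 fun m => ?_
  by_cases hm : d m = 0
  · exact Eventually.of_forall fun t => by simpa [hm] using hx m
  have hcont : Continuous fun t : ℝ => x m + t * d m := by fun_prop
  have hopen := (isOpen_Ioo.preimage hcont).mem_nhds
    (show x m + 0 * d m ∈ Ioo 0 1 by simpa using hd hm)
  exact Filter.mem_of_superset hopen fun t ht => Ioo_subset_Icc_self ht

theorem mem_cubeVerts_of_mem_extremePoints {W : Submodule ℝ (Fin N → ℝ)}
    (hW : ∀ x ∈ unitCube N ∩ W, ∀ i, x i ∈ Ioo 0 1 →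
      ∃ d ∈ W, d ≠ 0 ∧ Function.support d ⊆ {m | x m ∈ Ioo 0 1})
    {x : Fin N → ℝ} (hx : x ∈ (unitCube N ∩ W).extremePoints ℝ) : x ∈ cubeVerts N := by
  obtain ⟨⟨hxcube, hxW⟩, hext⟩ := hx
  intro i
  by_contra hi
  have hxi : x i ∈ Ioo 0 1 := by
    obtain ⟨h0, h1⟩ := hxcube i
    rw [not_or] at hi
    exact ⟨h0.lt_of_ne' hi.1, h1.lt_of_ne hi.2⟩
  obtain ⟨d, hdW, hd, hsupp⟩ := hW x ⟨hxcube, hxW⟩ i hxi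
  obtain ⟨ε, hε, hball⟩ :=
    Metric.eventually_nhds_iff.1 (eventually_add_smul_mem_unitCube hxcube hsupp)
  have hmem (t : ℝ) (ht : |t| < ε) : x + t • d ∈ unitCube N ∩ W :=
    ⟨hball (by simpa using ht), W.add_mem hxW (W.smul_mem t hdW)⟩
  have hε' : |ε / 2| < ε := by rw [abs_of_pos (by positivity)]; linarith
  have hseg : x ∈ openSegment ℝ (x + (ε / 2) • d) (x + (-(ε / 2)) • d) :=
    ⟨1 / 2, 1 / 2, by norm_num, by norm_num, by norm_num, by module⟩
  have := hext (hmem _ hε') (hmem _ (by rwa [abs_neg])) hseg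
  simp [hε.ne', hd] at this

theorem unitCube_inter_eq_convexHull {W : Submodule ℝ (Fin N → ℝ)}
    (hW : ∀ x ∈ unitCube N ∩ W, ∀ i, x i ∈ Ioo 0 1 →
      ∃ d ∈ W, d ≠ 0 ∧ Function.support d ⊆ {m | x m ∈ Ioo 0 1}) :
    unitCube N ∩ W = convexHull ℝ (cubeVerts N ∩ W) := by
  have hext : (unitCube N ∩ W).extremePoints ℝ ⊆ cubeVerts N ∩ W := fun x hx =>
    ⟨mem_cubeVerts_of_mem_extremePoints hW hx, hx.1.2⟩
  have hconv : Convex ℝ (unitCube N ∩ W) := by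
    rw [unitCube_eq_Icc]
    exact (convex_Icc 0 1).inter W.convex
  have hcomp : IsCompact (unitCube N ∩ W) := by
    rw [unitCube_eq_Icc]
    exact isCompact_Icc.inter_right W.closed_of_finiteDimensional
  refine subset_antisymm ?_
    (convexHull_min (inter_subset_inter_left _ cubeVerts_subset_unitCube) hconv)
  calc unitCube N ∩ W = convexHull ℝ ((unitCube N ∩ W).extremePoints ℝ) :=
        (convexHull_extremePoints_of_finite hcomp hconv
          ((cubeVerts_finite.inter_of_left _).subset hext)).symm
    _ ⊆ convexHull ℝ (cubeVerts N ∩ W) := convexHull_mono hext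

end Cube

section Integral

variable {N : ℕ}

theorem eq_zero_of_intCast_dotProduct_eq_zero {x : Fin N → ℝ} (hx : x ∈ unitCube N)
    {r : Fin N → ℤ} (hr : (Int.cast ∘ r : Fin N → ℝ) ⬝ᵥ x = 0) {i : Fin N} (hi : x i ∈ Ioo 0 1)
    (hri : |r i| ≤ 1) (hsupp : ∀ m ≠ i, x m ∈ Ioo 0 1 → r m = 0) : r i = 0 := by
  by_contra hri0
  have hterm (m : Fin N) (hm : m ≠ i) : (r m : ℝ) * x m = ((r m * ⌊x m⌋ : ℤ) : ℝ) := by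
    by_cases hxm : x m ∈ Ioo 0 1
    · simp [hsupp m hm hxm]
    · have : x m ∈ ({0, 1} : Set ℝ) := by rw [← Icc_sdiff_Ioo_same zero_le_one]; exact ⟨hx m, hxm⟩
      rcases this with h | h <;> simp_all
  have hint : (r i : ℝ) * x i = ((-∑ m ∈ Finset.univ.erase i, r m * ⌊x m⌋ : ℤ) : ℝ) := by
    rw [dotProduct, ← Finset.add_sum_erase _ _ (Finset.mem_univ i)] at hr
    simp only [Function.comp_apply] at hr
    rw [Finset.sum_congr rfl fun m hm => hterm m (Finset.ne_of_mem_erase hm)] at hr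
    push_cast at hr ⊢
    linear_combination hr
  set z := -∑ m ∈ Finset.univ.erase i, r m * ⌊x m⌋
  have hunit : r i * r i = 1 := by rcases Int.abs_le_one_iff.1 hri with h | h | h <;> simp_all
  have hxi : x i = ((r i * z : ℤ) : ℝ) := by
    rw [Int.cast_mul, ← hint, ← mul_assoc, ← Int.cast_mul, hunit, Int.cast_one, one_mul]
  obtain ⟨h0, h1⟩ := hi
  rw [hxi] at h0 h1
  have : (0 : ℤ) < r i * z := by exact_mod_cast h0
  have : r i * z < 1 := by exact_mod_cast h1
  omega

theorem mul_eq_mul_of_intCast_dotProduct_eq_zero {α β : Fin N → ℤ} {p q : Fin N}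
    (hαβ : |α p * β q - α q * β p| ≤ 1) {x : Fin N → ℝ} (hx : x ∈ unitCube N)
    (hαx : (Int.cast ∘ α : Fin N → ℝ) ⬝ᵥ x = 0) (hβx : (Int.cast ∘ β : Fin N → ℝ) ⬝ᵥ x = 0)
    (hp : x p ∈ Ioo 0 1) (hpq : ∀ m, x m ∈ Ioo 0 1 → m = p ∨ m = q) :
    α p * β q = α q * β p := by
  -- eliminating `x q` from the two equations leaves the row `r`, which vanishes at `q`
  set r : Fin N → ℤ := fun m => β q * α m - α q * β m
  have hr : (Int.cast ∘ r : Fin N → ℝ) ⬝ᵥ x = 0 := by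
    have : (Int.cast ∘ r : Fin N → ℝ) =
        (β q : ℝ) • (Int.cast ∘ α) - (α q : ℝ) • (Int.cast ∘ β) := by
      ext m
      simp [r]
    rw [this, sub_dotProduct, smul_dotProduct, smul_dotProduct, hαx, hβx]
    simp
  have hrp : r p = 0 := eq_zero_of_intCast_dotProduct_eq_zero hx hr hp
    (by simpa [r, mul_comm] using hαβ) fun m hmp hm => by
      obtain rfl : m = q := (hpq m hm).resolve_left hmp
      ring
  linear_combination hrp

theorem exists_ne_zero_support_subset_of_abs_det_le_one (α β : Fin N → ℤ)
    (hα : ∀ m, |α m| ≤ 1) (hβ : ∀ m, |β m| ≤ 1) (hαβ : ∀ m m', |α m * β m' - α m' * β m| ≤ 1)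
    {x : Fin N → ℝ} (hx : x ∈ unitCube N) (hαx : (Int.cast ∘ α : Fin N → ℝ) ⬝ᵥ x = 0)
    (hβx : (Int.cast ∘ β : Fin N → ℝ) ⬝ᵥ x = 0) {i : Fin N} (hi : x i ∈ Ioo 0 1) :
    ∃ d ≠ 0, Function.support d ⊆ {m | x m ∈ Ioo 0 1} ∧
      (Int.cast ∘ α : Fin N → ℝ) ⬝ᵥ d = 0 ∧ (Int.cast ∘ β : Fin N → ℝ) ⬝ᵥ d = 0 := by
  obtain ⟨F, hF⟩ : ∃ F : Finset (Fin N), ∀ m, m ∈ F ↔ x m ∈ Ioo 0 1 :=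
    ⟨Finset.univ.filter fun m => x m ∈ Ioo 0 1, by simp⟩
  have hcard : 2 < F.card ∨ F.card = 2 ∨ F.card = 1 := by
    have := Finset.card_pos.2 ⟨i, (hF i).2 hi⟩
    omega
  rcases hcard with hcard | hcard | hcard
  · obtain ⟨p, q, r, hp, hq, hr, hpq, hpr, hqr⟩ := Finset.two_lt_card_iff.1 hcard
    obtain ⟨d, hd, hsupp, hdα, hdβ⟩ := exists_ne_zero_dotProduct_eq_zero_of_triple
      (Int.cast ∘ α : Fin N → ℝ) (Int.cast ∘ β) hpq hpr hqr
    refine ⟨d, hd, hsupp.trans ?_, hdα, hdβ⟩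
    rintro m (rfl | rfl | rfl) <;> exact (hF _).1 ‹_›
  · obtain ⟨p, q, hpq, rfl⟩ := Finset.card_eq_two.1 hcard
    have hdet := mul_eq_mul_of_intCast_dotProduct_eq_zero (hαβ p q) hx hαx hβx
      ((hF p).1 (by simp)) fun m hm => by simpa using (hF m).2 hm
    obtain ⟨d, hd, hsupp, hdα, hdβ⟩ := exists_ne_zero_dotProduct_eq_zero_of_pair
      (Int.cast ∘ α : Fin N → ℝ) (Int.cast ∘ β) hpq
      (by simpa using congr_arg (Int.cast : ℤ → ℝ) hdet)
    refine ⟨d, hd, hsupp.trans ?_, hdα, hdβ⟩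
    rintro m (rfl | rfl) <;> exact (hF _).1 (by simp)
  · obtain ⟨p, rfl⟩ := Finset.card_eq_one.1 hcard
    have honly (m : Fin N) (hm : x m ∈ Ioo 0 1) : m = i := by
      rw [Finset.mem_singleton.1 ((hF m).2 hm), Finset.mem_singleton.1 ((hF i).2 hi)]
    have hαi := eq_zero_of_intCast_dotProduct_eq_zero hx hαx hi (hα i)
      fun m hmi hm => absurd (honly m hm) hmi
    have hβi := eq_zero_of_intCast_dotProduct_eq_zero hx hβx hi (hβ i)
      fun m hmi hm => absurd (honly m hm) hmi
    refine ⟨Pi.single i 1, by simp, Pi.support_single_subset.trans (by simpa using hi), ?_, ?_⟩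
    · simp [hαi]
    · simp [hβi]

end Integral

section EqualDot

variable {N : ℕ}

theorem dotp_eq_dotProduct (a b : Fin N → ℝ) : dotp a b = a ⬝ᵥ b := rfl

def equalDotSubspace (u v w : Fin N → ℝ) : Submodule ℝ (Fin N → ℝ) where
  carrier := {x | dotp u x = dotp v x ∧ dotp v x = dotp w x}
  add_mem' := by
    rintro x y ⟨hx₁, hx₂⟩ ⟨hy₁, hy₂⟩
    simp only [mem_ofPred_eq, dotp_eq_dotProduct, dotProduct_add] at *
    constructor <;> linarith
  zero_mem' := by simp [dotp_eq_dotProduct]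
  smul_mem' := by
    rintro c x ⟨hx₁, hx₂⟩
    simp only [mem_ofPred_eq, dotp_eq_dotProduct, dotProduct_smul] at *
    rw [hx₁, hx₂]
    exact ⟨rfl, rfl⟩

theorem mem_equalDotSubspace_iff {u v w x : Fin N → ℝ} :
    x ∈ equalDotSubspace u v w ↔ (u - v) ⬝ᵥ x = 0 ∧ (v - w) ⬝ᵥ x = 0 := by
  simp [equalDotSubspace, dotp_eq_dotProduct, sub_dotProduct, sub_eq_zero]

theorem exists_intCast_of_mem_cubeVerts {v : Fin N → ℝ} (hv : v ∈ cubeVerts N) :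
    ∃ κ : Fin N → ℤ, (∀ m, κ m = 0 ∨ κ m = 1) ∧ v = Int.cast ∘ κ := by
  refine ⟨fun m => ⌊v m⌋, fun m => ?_, funext fun m => ?_⟩ <;> rcases hv m with h | h <;> simp [h]

theorem abs_cross_sub_le_one_of_zero_one {a b c a' b' c' : ℤ} (ha : a = 0 ∨ a = 1)
    (hb : b = 0 ∨ b = 1) (hc : c = 0 ∨ c = 1) (ha' : a' = 0 ∨ a' = 1) (hb' : b' = 0 ∨ b' = 1)
    (hc' : c' = 0 ∨ c' = 1) : |(a - b) * (b' - c') - (a' - b') * (b - c)| ≤ 1 := by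
  rcases ha with rfl | rfl <;> rcases hb with rfl | rfl <;> rcases hc with rfl | rfl <;>
    rcases ha' with rfl | rfl <;> rcases hb' with rfl | rfl <;> rcases hc' with rfl | rfl <;>
    decide

theorem exists_ne_zero_mem_equalDotSubspace {κ ι ν : Fin N → ℤ} (hκ : ∀ m, κ m = 0 ∨ κ m = 1)
    (hι : ∀ m, ι m = 0 ∨ ι m = 1) (hν : ∀ m, ν m = 0 ∨ ν m = 1) {x : Fin N → ℝ}
    (hx : x ∈ unitCube N ∩ equalDotSubspace (Int.cast ∘ κ) (Int.cast ∘ ι) (Int.cast ∘ ν))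
    {i : Fin N} (hi : x i ∈ Ioo 0 1) :
    ∃ d ∈ equalDotSubspace (Int.cast ∘ κ) (Int.cast ∘ ι) (Int.cast ∘ ν),
      d ≠ 0 ∧ Function.support d ⊆ {m | x m ∈ Ioo 0 1} := by
  have hcast (α β : Fin N → ℤ) :
      (Int.cast ∘ α - Int.cast ∘ β : Fin N → ℝ) = Int.cast ∘ (α - β) := by
    ext m
    simp
  obtain ⟨hxcube, hxW⟩ := hx
  rw [SetLike.mem_coe, mem_equalDotSubspace_iff, hcast, hcast] at hxW
  obtain ⟨d, hd, hsupp, hdα, hdβ⟩ := exists_ne_zero_support_subset_of_abs_det_le_one (κ - ι) (ι - ν)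
    (fun m => by rcases hκ m with h | h <;> rcases hι m with h' | h' <;> simp [h, h'])
    (fun m => by rcases hι m with h | h <;> rcases hν m with h' | h' <;> simp [h, h'])
    (fun m m' => abs_cross_sub_le_one_of_zero_one (hκ m) (hι m) (hν m) (hκ m') (hι m') (hν m'))
    hxcube hxW.1 hxW.2 hi
  exact ⟨d, by rw [mem_equalDotSubspace_iff, hcast, hcast]; exact ⟨hdα, hdβ⟩, hd, hsupp⟩

end EqualDot

theorem stmt_3 {N : ℕ} (xk xj xl : Fin N → ℝ)
    (hxk : xk ∈ cubeVerts N) (hxj : xj ∈ cubeVerts N) (hxl : xl ∈ cubeVerts N) :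
    {x ∈ unitCube N | dotp xk x = dotp xj x ∧ dotp xj x = dotp xl x} =
      convexHull ℝ {h ∈ cubeVerts N | dotp xk h = dotp xj h ∧ dotp xj h = dotp xl h} := by
  obtain ⟨κ, hκ, rfl⟩ := exists_intCast_of_mem_cubeVerts hxk
  obtain ⟨ι, hι, rfl⟩ := exists_intCast_of_mem_cubeVerts hxj
  obtain ⟨ν, hν, rfl⟩ := exists_intCast_of_mem_cubeVerts hxl
  exact unitCube_inter_eq_convexHull fun x hx i hi =>
    exists_ne_zero_mem_equalDotSubspace hκ hι hν hx hi
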